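/- arXiv:1907.07214 — 3 statements merged into one kernel-verified Lean document; each statement's English description precedes it below -/
import Mathlib

section
/- Let P ⊂ ℝ^4 be the 4-dimensional lattice polytope with vertices (0,0,0,0), (1,1,0,0), (1,0,1,0), (1,0,0,1), (0,1,1,0), (0,1,0,1) and (0,0,1,1). Then the h*-vector of P is (1, 2, 5), and P is not spanning: the point (1,1,1,0) lies in 2P ∩ ℤ^4, but it does not lie in the lattice generated by the vertices of P together with ℤ·(0,0,0,0) differences, since every lattice point of P has even coordinate sum while (1,1,1,0) has odd coordinate sum. -/
open scoped BigOperators Pointwise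

namespace LatticePolytope

variable (n : ℕ)

/-- The real vector corresponding to an integer vector. -/
def toReal (x : Fin n → ℤ) : Fin n → ℝ := fun i => (x i : ℝ)

/-- The real point of `ℝ^n × ℝ` corresponding to an integer point of `ℤ^n × ℤ`. -/
def toRealPair (z : (Fin n → ℤ) × ℤ) : (Fin n → ℝ) × ℝ := (toReal n z.1, (z.2 : ℝ))

/-- `P` is a lattice polytope: the convex hull of finitely many integer points. -/
def IsLatticePolytope (P : Set (Fin n → ℝ)) : Prop :=
  ∃ V : Finset (Fin n → ℤ), P = convexHull ℝ (toReal n '' ↑V)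

/-- The dimension of a polytope, i.e. the dimension of its affine span. -/
noncomputable def dimP (P : Set (Fin n → ℝ)) : ℕ := Module.finrank ℝ ↥(vectorSpan ℝ P)

/-- The number of lattice points of the `k`-th dilate `kP` of `P`, as an integer. -/
noncomputable def ehr (P : Set (Fin n → ℝ)) (k : ℕ) : ℤ :=
  (Set.ncard {x : Fin n → ℤ | toReal n x ∈ (k : ℝ) • P} : ℤ)

/-- `P` has `h^*`-"vector" given by the coefficient function `h : ℕ → ℕ` (entries beyond the
degree being `0`), with respect to the Ehrhart series identity
`∑_k #(kP ∩ ℤ^n) t^k = (∑_i h_i t^i) / (1-t)^{d+1}`. -/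
def HasHStar (P : Set (Fin n → ℝ)) (d : ℕ) (h : ℕ → ℕ) : Prop :=
  (PowerSeries.mk fun k => ehr n P k) * (1 - PowerSeries.X) ^ (d + 1) =
    PowerSeries.mk fun i => (h i : ℤ)

/-- `P` has the integer decomposition property: every lattice point of `kP` is a sum of `k`
lattice points of `P`. -/
def IsIDP (P : Set (Fin n → ℝ)) : Prop :=
  ∀ (k : ℕ) (x : Fin n → ℤ), toReal n x ∈ (k : ℝ) • P →
    ∃ f : Fin k → Fin n → ℤ, (∀ j, toReal n (f j) ∈ P) ∧ ∑ j, f j = x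

/-- The set `P × {1} ⊆ ℝ^n × ℝ`. -/
def liftSet (P : Set (Fin n → ℝ)) : Set ((Fin n → ℝ) × ℝ) := {x | x.1 ∈ P ∧ x.2 = 1}

/-- The subgroup of `ℤ^n × ℤ` generated by the lattice points of `P × {1}`. -/
def latticeGroup (P : Set (Fin n → ℝ)) : AddSubgroup ((Fin n → ℤ) × ℤ) :=
  AddSubgroup.closure {z | toRealPair n z ∈ liftSet n P}

/-- `P` is spanning: the lattice points of `P × {1}` generate the group of all integer points
of the linear span of `P × {1}`. -/
def IsSpanning (P : Set (Fin n → ℝ)) : Prop :=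
  ∀ z : (Fin n → ℤ) × ℤ,
    z ∈ latticeGroup n P ↔ toRealPair n z ∈ (Submodule.span ℝ (liftSet n P) : Set _)

/-- The cone over `P × {1}` in `ℝ^n × ℝ`. -/
def coneOver (P : Set (Fin n → ℝ)) : Set ((Fin n → ℝ) × ℝ) :=
  {x | ∃ t : ℝ, 0 ≤ t ∧ ∃ p ∈ P, x = t • (p, (1 : ℝ))}

/-- The affine monoid `M_P` generated by the lattice points of `P × {1}`. -/
def MP (P : Set (Fin n → ℝ)) : AddSubmonoid ((Fin n → ℤ) × ℤ) :=
  AddSubmonoid.closure {z | toRealPair n z ∈ liftSet n P}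

/-- The monoid `M̄_P` of all lattice points of the cone over `P × {1}`; as a set it is a
submonoid of `ℤ^n × ℤ`, and it is the integral closure of `M_P`. -/
def MBar (P : Set (Fin n → ℝ)) : AddSubmonoid ((Fin n → ℤ) × ℤ) :=
  AddSubmonoid.closure {z | toRealPair n z ∈ coneOver n P}

/-- The number of points of the `k`-th dilate of `P` lying in the sublattice generated by the
lattice points of `P` (at height `k`); this is the Ehrhart counting function of `P̃`. -/
noncomputable def ehrSub (P : Set (Fin n → ℝ)) (k : ℕ) : ℤ :=
  (Set.ncard {x : Fin n → ℤ |
    toReal n x ∈ (k : ℝ) • P ∧ (x, (k : ℤ)) ∈ latticeGroup n P} : ℤ)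

/-- The `h^*`-coefficient function of `P̃`, the polytope `P` regarded with respect to the
lattice generated by its lattice points. -/
def HasHStarSub (P : Set (Fin n → ℝ)) (d : ℕ) (h : ℕ → ℕ) : Prop :=
  (PowerSeries.mk fun k => ehrSub n P k) * (1 - PowerSeries.X) ^ (d + 1) =
    PowerSeries.mk fun i => (h i : ℤ)

/-- The Ehrhart ring `k[P]` is level: its canonical module, i.e. the module spanned by the
lattice points of the relative interior of the cone over `P`, is generated in a single degree
over the monoid of lattice points of the cone. -/
def IsLevel (P : Set (Fin n → ℝ)) : Prop :=
  ∃ m : ℤ, ∀ z : (Fin n → ℤ) × ℤ, toRealPair n z ∈ intrinsicInterior ℝ (coneOver n P) →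
    ∃ a b : (Fin n → ℤ) × ℤ, toRealPair n a ∈ intrinsicInterior ℝ (coneOver n P) ∧
      a.2 = m ∧ toRealPair n b ∈ coneOver n P ∧ z = a + b

end LatticePolytope


open Finset

namespace CountAux

def sum3 (q : ℕ × ℕ × ℕ) : ℕ := q.1 + q.2.1 + q.2.2
attribute [reducible] sum3

def B3 (m : ℕ) : Finset (ℕ × ℕ × ℕ) := range (m+1) ×ˢ range (m+1) ×ˢ range (m+1)

lemma mem_B3 {m : ℕ} {q : ℕ × ℕ × ℕ} : q ∈ B3 m ↔ q.1 ≤ m ∧ q.2.1 ≤ m ∧ q.2.2 ≤ m := by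
  simp [B3, Nat.lt_succ_iff]

def S2 (n : ℕ) : Finset (ℕ × ℕ) := (range (n+1) ×ˢ range (n+1)).filter fun p => p.1 + p.2 ≤ n

def S3 (n : ℕ) : Finset (ℕ × ℕ × ℕ) := (B3 n).filter fun q => sum3 q ≤ n

lemma card_slice2 (s : ℕ) :
    ((range (s+1) ×ˢ range (s+1)).filter fun p => p.1 + p.2 = s).card = s + 1 := by
  have h : ((range (s+1) ×ˢ range (s+1)).filter fun p => p.1 + p.2 = s).card = (range (s+1)).card := by
    apply card_nbij' (fun p => p.1) (fun a => (a, s - a))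
    · intro p hp; simp only [Finset.mem_coe, mem_filter, mem_product, mem_range] at hp ⊢; omega
    · intro a ha; simp only [Finset.mem_coe, mem_filter, mem_product, mem_range] at ha ⊢; omega
    · intro p hp; simp only [Finset.mem_coe, mem_filter, mem_product, mem_range] at hp
      ext <;> simp <;> omega
    · intro a ha; simp
  simpa using h

lemma card_S2 (n : ℕ) : 2 * (S2 n).card = (n+1) * (n+2) := by
  induction n with
  | zero => decide
  | succ n ih =>
    have hsplit : S2 (n+1) = S2 n ∪ ((range (n+2) ×ˢ range (n+2)).filter fun p => p.1 + p.2 = n+1) := by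
      ext p
      simp only [S2, mem_union, mem_filter, mem_product, mem_range]
      omega
    have hdisj : Disjoint (S2 n) ((range (n+2) ×ˢ range (n+2)).filter fun p => p.1 + p.2 = n+1) := by
      rw [disjoint_left]
      intro p hp hp'
      simp only [S2, mem_filter, mem_product, mem_range] at hp hp'
      omega
    rw [hsplit, card_union_of_disjoint hdisj, card_slice2]
    ring_nf
    ring_nf at ih
    omega

lemma card_slice3 (s : ℕ) :
    2 * ((B3 s).filter fun q => sum3 q = s).card = (s+1) * (s+2) := by
  rw [← card_S2 s]
  congr 1
  apply card_nbij' (fun q => (q.1, q.2.1)) (fun p => (p.1, p.2, s - p.1 - p.2))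
  · intro q hq; simp only [Finset.mem_coe, mem_filter, mem_B3, S2, mem_product, mem_range, sum3] at hq ⊢; omega
  · intro p hp; simp only [Finset.mem_coe, mem_filter, mem_B3, S2, mem_product, mem_range, sum3] at hp ⊢; omega
  · intro q hq; simp only [Finset.mem_coe, mem_filter, mem_B3, sum3] at hq
    ext <;> simp <;> omega
  · intro p hp; simp

lemma card_S3 (n : ℕ) : 6 * (S3 n).card = (n+1) * (n+2) * (n+3) := by
  induction n with
  | zero => decide
  | succ n ih =>
    have hsplit : S3 (n+1) = S3 n ∪ ((B3 (n+1)).filter fun q => sum3 q = n+1) := by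
      ext q
      simp only [S3, mem_union, mem_filter, mem_B3, sum3]
      omega
    have hdisj : Disjoint (S3 n) ((B3 (n+1)).filter fun q => sum3 q = n+1) := by
      rw [disjoint_left]
      intro q hq hq'
      simp only [S3, mem_filter, mem_B3, sum3] at hq hq'
      omega
    rw [hsplit, card_union_of_disjoint hdisj, Nat.mul_add]
    have h3 := card_slice3 (n+1)
    ring_nf
    ring_nf at ih h3
    omega

lemma card_low {m t : ℕ} (h : t ≤ m) :
    ((B3 m).filter fun q => sum3 q ≤ t).card = (S3 t).card := by
  congr 1
  ext q
  simp only [S3, mem_filter, mem_B3, sum3]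
  omega

lemma card_high (m t : ℕ) :
    ((B3 m).filter fun q => 3*m ≤ sum3 q + t).card
      = ((B3 m).filter fun q => sum3 q ≤ t).card := by
  apply card_nbij' (fun q => (m - q.1, m - q.2.1, m - q.2.2)) (fun q => (m - q.1, m - q.2.1, m - q.2.2))
  · intro q hq; simp only [Finset.mem_coe, mem_filter, mem_B3, sum3] at hq ⊢; omega
  · intro q hq; simp only [Finset.mem_coe, mem_filter, mem_B3, sum3] at hq ⊢; omega
  · intro q hq; simp only [Finset.mem_coe, mem_filter, mem_B3, sum3] at hq
    ext <;> simp <;> omega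
  · intro q hq; simp only [Finset.mem_coe, mem_filter, mem_B3, sum3] at hq
    ext <;> simp <;> omega

def MIDe (m : ℕ) : Finset (ℕ × ℕ × ℕ) := (B3 m).filter fun q => m ≤ sum3 q ∧ sum3 q ≤ 2*m

def MIDo (m : ℕ) : Finset (ℕ × ℕ × ℕ) := (B3 m).filter fun q => m+1 ≤ sum3 q ∧ sum3 q ≤ 2*m+1

lemma B3_partition_e (m : ℕ) :
    (B3 m).card = ((B3 m).filter fun q => sum3 q + 1 ≤ m).card + (MIDe m).card
      + ((B3 m).filter fun q => 2*m + 1 ≤ sum3 q).card := by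
  classical
  have h1 := Finset.card_filter_add_card_filter_not (s := B3 m)
    (p := fun q => sum3 q ≤ 2*m)
  have h2 := Finset.card_filter_add_card_filter_not
    (s := (B3 m).filter fun q => sum3 q ≤ 2*m) (p := fun q => m ≤ sum3 q)
  rw [filter_filter, filter_filter] at h2
  have e1 : ((B3 m).filter fun q => ¬ sum3 q ≤ 2*m) = (B3 m).filter fun q => 2*m+1 ≤ sum3 q := by
    ext q; simp only [mem_filter, mem_B3]; omega
  have e2 : ((B3 m).filter fun q => sum3 q ≤ 2*m ∧ m ≤ sum3 q) = MIDe m := by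
    ext q; simp only [MIDe, mem_filter, mem_B3]; omega
  have e3 : ((B3 m).filter fun q => sum3 q ≤ 2*m ∧ ¬ m ≤ sum3 q) = (B3 m).filter fun q => sum3 q + 1 ≤ m := by
    ext q; simp only [mem_filter, mem_B3]; omega
  rw [e1] at h1
  rw [e2, e3] at h2
  omega

lemma B3_partition_o (m : ℕ) :
    (B3 m).card = ((B3 m).filter fun q => sum3 q ≤ m).card + (MIDo m).card
      + ((B3 m).filter fun q => 2*m + 2 ≤ sum3 q).card := by
  classical
  have h1 := Finset.card_filter_add_card_filter_not (s := B3 m)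
    (p := fun q => sum3 q ≤ 2*m+1)
  have h2 := Finset.card_filter_add_card_filter_not
    (s := (B3 m).filter fun q => sum3 q ≤ 2*m+1) (p := fun q => m+1 ≤ sum3 q)
  rw [filter_filter, filter_filter] at h2
  have e1 : ((B3 m).filter fun q => ¬ sum3 q ≤ 2*m+1) = (B3 m).filter fun q => 2*m+2 ≤ sum3 q := by
    ext q; simp only [mem_filter, mem_B3]; omega
  have e2 : ((B3 m).filter fun q => sum3 q ≤ 2*m+1 ∧ m+1 ≤ sum3 q) = MIDo m := by
    ext q; simp only [MIDo, mem_filter, mem_B3]; omega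
  have e3 : ((B3 m).filter fun q => sum3 q ≤ 2*m+1 ∧ ¬ m+1 ≤ sum3 q) = (B3 m).filter fun q => sum3 q ≤ m := by
    ext q; simp only [mem_filter, mem_B3]; omega
  rw [e1] at h1
  rw [e2, e3] at h2
  omega

lemma card_B3 (m : ℕ) : (B3 m).card = (m+1)^3 := by
  simp [B3]; ring

lemma card_MIDe (m : ℕ) : (6 * (MIDe m).card : ℤ) = 4*m^3 + 12*m^2 + 14*m + 6 := by
  have hp := B3_partition_e m
  have hlow : 6 * ((B3 m).filter fun q => sum3 q + 1 ≤ m).card = m * (m+1) * (m+2) := by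
    match m with
    | 0 =>
      have : ((B3 0).filter fun q => sum3 q + 1 ≤ 0) = ∅ := by
        ext q; simp only [mem_filter, mem_B3, notMem_empty, sum3, iff_false, not_and]; omega
      simp [this]
    | m+1 =>
      have : ((B3 (m+1)).filter fun q => sum3 q + 1 ≤ m+1) = (B3 (m+1)).filter fun q => sum3 q ≤ m := by
        ext q; simp only [mem_filter, mem_B3]; omega
      rw [this, card_low (by omega), card_S3]
      try ring
  have hhigh : 6 * ((B3 m).filter fun q => 2*m + 1 ≤ sum3 q).card = m * (m+1) * (m+2) := by
    match m with
    | 0 =>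
      have : ((B3 0).filter fun q => 2*0 + 1 ≤ sum3 q) = ∅ := by
        ext q; simp only [mem_filter, mem_B3, notMem_empty, sum3, iff_false, not_and]; omega
      simp [this]
    | m+1 =>
      have e : ((B3 (m+1)).filter fun q => 2*(m+1) + 1 ≤ sum3 q)
          = (B3 (m+1)).filter fun q => 3*(m+1) ≤ sum3 q + m := by
        ext q; simp only [mem_filter, mem_B3]; omega
      rw [e, card_high, card_low (by omega), card_S3]
      try ring
  have hb := card_B3 m
  have key : 6 * (MIDe m).card + 2*(m*(m+1)*(m+2)) = 6*(m+1)^3 := by omega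
  have keyz := congrArg (Nat.cast : ℕ → ℤ) key
  push_cast at keyz
  linear_combination keyz


lemma card_MIDo (m : ℕ) : (6 * (MIDo m).card : ℤ) = 4*m^3 + 12*m^2 + 8*m := by
  match m with
  | 0 =>
    have h : (MIDo 0).card = 0 := by decide
    rw [h]; norm_num
  | 1 =>
    have h : (MIDo 1).card = 4 := by decide
    rw [h]; norm_num
  | (m+2) =>
    have hp := B3_partition_o (m+2)
    have hlow : 6 * ((B3 (m+2)).filter fun q => sum3 q ≤ m+2).card = (m+3) * (m+4) * (m+5) := by
      rw [card_low (by omega), card_S3]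
      try ring
    have hhigh : 6 * ((B3 (m+2)).filter fun q => 2*(m+2) + 2 ≤ sum3 q).card
        = (m+1) * (m+2) * (m+3) := by
      have e : ((B3 (m+2)).filter fun q => 2*(m+2) + 2 ≤ sum3 q)
          = (B3 (m+2)).filter fun q => 3*(m+2) ≤ sum3 q + m := by
        ext q; simp only [mem_filter, mem_B3, sum3]; omega
      rw [e, card_high, card_low (by omega), card_S3]
      try ring
    have hb := card_B3 (m+2)
    have key : 6 * (MIDo (m+2)).card + (m+3)*(m+4)*(m+5) + (m+1)*(m+2)*(m+3) = 6*(m+2+1)^3 := by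
      omega
    have keyz := congrArg (Nat.cast : ℕ → ℤ) key
    push_cast at keyz
    push_cast
    linear_combination keyz

def sum4 (x : ℕ × ℕ × ℕ × ℕ) : ℕ := x.1 + x.2.1 + x.2.2.1 + x.2.2.2
attribute [reducible] sum4

def B4 (k : ℕ) : Finset (ℕ × ℕ × ℕ × ℕ) :=
  range (k+1) ×ˢ range (k+1) ×ˢ range (k+1) ×ˢ range (k+1)

lemma mem_B4 {k : ℕ} {x : ℕ × ℕ × ℕ × ℕ} :
    x ∈ B4 k ↔ x.1 ≤ k ∧ x.2.1 ≤ k ∧ x.2.2.1 ≤ k ∧ x.2.2.2 ≤ k := by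
  simp [B4, Nat.lt_succ_iff]

def Q (k : ℕ) : Finset (ℕ × ℕ × ℕ × ℕ) :=
  (B4 k).filter fun x => (2*x.1 ≤ sum4 x ∧ 2*x.2.1 ≤ sum4 x ∧ 2*x.2.2.1 ≤ sum4 x ∧
    2*x.2.2.2 ≤ sum4 x) ∧ sum4 x ≤ 2*k

def D (s : ℕ) : Finset (ℕ × ℕ × ℕ × ℕ) :=
  (B4 s).filter fun x => (2*x.1 ≤ sum4 x ∧ 2*x.2.1 ≤ sum4 x ∧ 2*x.2.2.1 ≤ sum4 x ∧
    2*x.2.2.2 ≤ sum4 x) ∧ sum4 x = s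

lemma Q_split (k : ℕ) : Q (k+1) = Q k ∪ D (2*k+1) ∪ D (2*k+2) := by
  ext x
  simp only [Q, D, mem_union, mem_filter, mem_B4, sum4]
  omega

lemma Q_disj1 (k : ℕ) : Disjoint (Q k) (D (2*k+1)) := by
  rw [disjoint_left]
  intro x hx hx'
  simp only [Q, D, mem_filter, mem_B4, sum4] at hx hx'
  omega

lemma Q_disj2 (k : ℕ) : Disjoint (Q k ∪ D (2*k+1)) (D (2*k+2)) := by
  rw [disjoint_left]
  intro x hx hx'
  simp only [Q, D, mem_union, mem_filter, mem_B4, sum4] at hx hx'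
  omega

lemma card_D_even (m : ℕ) : (D (2*m)).card = (MIDe m).card := by
  apply card_nbij' (fun x => (x.1, x.2.1, x.2.2.1)) (fun q => (q.1, q.2.1, q.2.2, 2*m - sum3 q))
  · intro x hx; simp only [Finset.mem_coe, D, MIDe, mem_filter, mem_B4, mem_B3, sum4, sum3] at hx ⊢; omega
  · intro q hq; simp only [Finset.mem_coe, D, MIDe, mem_filter, mem_B4, mem_B3, sum4, sum3] at hq ⊢; omega
  · intro x hx; simp only [Finset.mem_coe, D, mem_filter, mem_B4, sum4] at hx
    ext <;> simp [sum3] <;> omega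
  · intro q hq; simp

lemma card_D_odd (m : ℕ) : (D (2*m+1)).card = (MIDo m).card := by
  apply card_nbij' (fun x => (x.1, x.2.1, x.2.2.1)) (fun q => (q.1, q.2.1, q.2.2, 2*m+1 - sum3 q))
  · intro x hx; simp only [Finset.mem_coe, D, MIDo, mem_filter, mem_B4, mem_B3, sum4, sum3] at hx ⊢; omega
  · intro q hq; simp only [Finset.mem_coe, D, MIDo, mem_filter, mem_B4, mem_B3, sum4, sum3] at hq ⊢; omega
  · intro x hx; simp only [Finset.mem_coe, D, mem_filter, mem_B4, sum4] at hx
    ext <;> simp [sum3] <;> omega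
  · intro q hq; simp

lemma card_Q (k : ℕ) : (24 * (Q k).card : ℤ) = 8*k^4 + 32*k^3 + 52*k^2 + 52*k + 24 := by
  induction k with
  | zero =>
    have h : (Q 0).card = 1 := by decide
    rw [h]; norm_num
  | succ k ih =>
    have e2 : (2*k+2) = 2*(k+1) := by ring
    have hcard : (Q (k+1)).card = (Q k).card + (MIDo k).card + (MIDe (k+1)).card := by
      rw [Q_split, card_union_of_disjoint (Q_disj2 k), card_union_of_disjoint (Q_disj1 k),
        card_D_odd, e2, card_D_even]
    have h1 := card_MIDo k
    have h2 := card_MIDe (k+1)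
    push_cast at h2
    rw [hcard]
    push_cast
    linear_combination ih + 4*h1 + 4*h2

end CountAux

namespace LatticePolytope
namespace Aux

def VZ : Set (Fin 4 → ℤ) :=
  {![0,0,0,0], ![1,1,0,0], ![1,0,1,0], ![1,0,0,1], ![0,1,1,0], ![0,1,0,1], ![0,0,1,1]}

noncomputable def Pset : Set (Fin 4 → ℝ) := convexHull ℝ (toReal 4 '' VZ)

def Vfun : Fin 7 → (Fin 4 → ℤ) :=
  ![![0,0,0,0], ![1,1,0,0], ![1,0,1,0], ![1,0,0,1], ![0,1,1,0], ![0,1,0,1], ![0,0,1,1]]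

@[simp] lemma cons_val_five {α : Type*} (a b c d e f g : α) : ![a,b,c,d,e,f,g] 5 = f := rfl
@[simp] lemma cons_val_six {α : Type*} (a b c d e f g : α) : ![a,b,c,d,e,f,g] 6 = g := rfl

lemma Vfun_mem (j : Fin 7) : Vfun j ∈ VZ := by
  fin_cases j <;> simp [Vfun, VZ]

/-- The explicit convex-combination construction. -/
lemma comb_mem (p : Fin 4 → ℝ) (h0 : ∀ i, 0 ≤ p i)
    (hs : ∀ i, 2 * p i ≤ p 0 + p 1 + p 2 + p 3)
    (h2 : p 0 + p 1 + p 2 + p 3 ≤ 2) : p ∈ Pset := by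
  obtain ⟨s, hsdef⟩ : ∃ s : ℝ, s = p 0 + p 1 + p 2 + p 3 := ⟨_, rfl⟩
  obtain ⟨du, hdu⟩ : ∃ d : ℝ, d = (p 0 + p 1 - p 2 - p 3)/2 := ⟨_, rfl⟩
  obtain ⟨dv, hdv⟩ : ∃ d : ℝ, d = (p 0 + p 2 - p 1 - p 3)/2 := ⟨_, rfl⟩
  obtain ⟨dw, hdw⟩ : ∃ d : ℝ, d = (p 0 + p 3 - p 1 - p 2)/2 := ⟨_, rfl⟩
  obtain ⟨r, hr⟩ : ∃ r : ℝ, r = s/2 - (|du| + |dv| + |dw|) := ⟨_, rfl⟩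
  have hp0 := h0 0; have hp1 := h0 1; have hp2 := h0 2; have hp3 := h0 3
  have hs0 := hs 0; have hs1 := hs 1; have hs2 := hs 2; have hs3 := hs 3
  have hrnn : 0 ≤ r := by
    rw [hr]
    rcases abs_cases du with ⟨e1, _⟩ | ⟨e1, _⟩ <;>
      rcases abs_cases dv with ⟨e2, _⟩ | ⟨e2, _⟩ <;>
      rcases abs_cases dw with ⟨e3, _⟩ | ⟨e3, _⟩ <;>
      rw [e1, e2, e3] <;> rw [hdu, hdv, hdw, hsdef] <;> linarith
  obtain ⟨w0, hw0⟩ : ∃ w : ℝ, w = 1 - s/2 := ⟨_, rfl⟩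
  obtain ⟨w1, hw1⟩ : ∃ w : ℝ, w = (|du| + r/3 + du)/2 := ⟨_, rfl⟩
  obtain ⟨w2, hw2⟩ : ∃ w : ℝ, w = (|dv| + r/3 + dv)/2 := ⟨_, rfl⟩
  obtain ⟨w3, hw3⟩ : ∃ w : ℝ, w = (|dw| + r/3 + dw)/2 := ⟨_, rfl⟩
  obtain ⟨w4, hw4⟩ : ∃ w : ℝ, w = (|dw| + r/3 - dw)/2 := ⟨_, rfl⟩
  obtain ⟨w5, hw5⟩ : ∃ w : ℝ, w = (|dv| + r/3 - dv)/2 := ⟨_, rfl⟩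
  obtain ⟨w6, hw6⟩ : ∃ w : ℝ, w = (|du| + r/3 - du)/2 := ⟨_, rfl⟩
  set W : Fin 7 → ℝ := ![w0, w1, w2, w3, w4, w5, w6] with hW
  have hW0 : ∀ j, 0 ≤ W j := by
    intro j
    have a1 := abs_nonneg du; have a2 := abs_nonneg dv; have a3 := abs_nonneg dw
    have b1 := neg_abs_le du; have b2 := neg_abs_le dv; have b3 := neg_abs_le dw
    have c1 := le_abs_self du; have c2 := le_abs_self dv; have c3 := le_abs_self dw
    have hss : 0 ≤ s := by rw [hsdef]; linarith
    fin_cases j <;> norm_num [hW] <;>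
      simp only [hw0, hw1, hw2, hw3, hw4, hw5, hw6] <;> linarith [hsdef.le, hsdef.ge, h2]
  have hWsum : ∑ j, W j = 1 := by
    rw [Fin.sum_univ_seven]
    norm_num [hW, Matrix.cons_val_two, Matrix.cons_val_three, Matrix.cons_val_four, Matrix.tail_cons, Matrix.head_cons]
    simp only [hw0, hw1, hw2, hw3, hw4, hw5, hw6, hr, hsdef]
    ring
  have key : p = ∑ j, W j • toReal 4 (Vfun j) := by
    funext i
    have happ : (∑ j, W j • toReal 4 (Vfun j)) i = ∑ j, W j * toReal 4 (Vfun j) i := by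
      simp [Finset.sum_apply]
    rw [happ, Fin.sum_univ_seven]
    simp only [hW, Matrix.cons_val_zero, Matrix.cons_val_one, Matrix.head_cons, Matrix.cons_val_two,
      Matrix.tail_cons, Matrix.cons_val_three, Matrix.cons_val_four, cons_val_five, cons_val_six,
      Vfun]
    fin_cases i <;>
      · norm_num [toReal]
        simp only [hw0, hw1, hw2, hw3, hw4, hw5, hw6, hr, hdu, hdv, hdw, hsdef]
        ring_nf
        try rfl
  rw [key, ← Finset.centerMass_eq_of_sum_1 _ _ hWsum]
  exact Finset.centerMass_mem_convexHull _ (fun j _ => hW0 j) (by rw [hWsum]; norm_num)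
    (fun j _ => Set.mem_image_of_mem _ (Vfun_mem j))

def Hcond (p : Fin 4 → ℝ) : Prop :=
  (∀ i, 0 ≤ p i) ∧ (∀ i, 2 * p i ≤ p 0 + p 1 + p 2 + p 3) ∧ p 0 + p 1 + p 2 + p 3 ≤ 2

lemma convex_H : Convex ℝ {p : Fin 4 → ℝ | Hcond p} := by
  intro x hx y hy a b ha hb hab
  obtain ⟨hx0, hx1, hx2⟩ := hx
  obtain ⟨hy0, hy1, hy2⟩ := hy
  refine ⟨fun i => ?_, fun i => ?_, ?_⟩ <;>
    simp only [Pi.add_apply, Pi.smul_apply, smul_eq_mul]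
  · exact add_nonneg (mul_nonneg ha (hx0 i)) (mul_nonneg hb (hy0 i))
  · have h1 := mul_le_mul_of_nonneg_left (hx1 i) ha
    have h2 := mul_le_mul_of_nonneg_left (hy1 i) hb
    linarith
  · have h1 := mul_le_mul_of_nonneg_left hx2 ha
    have h2 := mul_le_mul_of_nonneg_left hy2 hb
    linarith

lemma vert_cond {v : Fin 4 → ℤ} (h : v ∈ VZ) : Hcond (toReal 4 v) := by
  simp only [VZ, Set.mem_insert_iff, Set.mem_singleton_iff] at h
  rcases h with rfl | rfl | rfl | rfl | rfl | rfl | rfl <;>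
    refine ⟨fun i => ?_, fun i => ?_, by norm_num [toReal, Matrix.cons_val_two, Matrix.cons_val_three, Matrix.tail_cons, Matrix.head_cons]⟩ <;>
    fin_cases i <;> norm_num [toReal, Matrix.cons_val_two, Matrix.cons_val_three, Matrix.tail_cons, Matrix.head_cons]

lemma mem_Pset_iff (p : Fin 4 → ℝ) : p ∈ Pset ↔ Hcond p := by
  constructor
  · intro hp
    refine convexHull_min ?_ convex_H hp
    rintro q ⟨v, hv, rfl⟩
    exact vert_cond hv
  · rintro ⟨h1, h2, h3⟩
    exact comb_mem p h1 h2 h3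

lemma mem_smul_iff (k : ℕ) (x : Fin 4 → ℤ) :
    toReal 4 x ∈ (k : ℝ) • Pset ↔
      (∀ i, 0 ≤ x i) ∧ (∀ i, 2 * x i ≤ x 0 + x 1 + x 2 + x 3) ∧
        x 0 + x 1 + x 2 + x 3 ≤ 2 * k := by
  have hP0 : Pset.Nonempty := ⟨toReal 4 ![0,0,0,0], vert_cond (by simp [VZ]) |> (mem_Pset_iff _).mpr⟩
  rcases Nat.eq_zero_or_pos k with rfl | hk
  · simp only [Nat.cast_zero, Set.zero_smul_set hP0]
    constructor
    · intro hx
      have hx' : toReal 4 x = 0 := by simpa using hx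
      have hcoord : ∀ i, x i = 0 := by
        intro i
        have := congrFun hx' i
        simpa [toReal] using this
      simp [hcoord]
    · rintro ⟨h1, h2, h3⟩
      have h00 := h1 0; have h01 := h1 1; have h02 := h1 2; have h03 := h1 3
      have e0 : x 0 = 0 := by omega
      have e1 : x 1 = 0 := by omega
      have e2 : x 2 = 0 := by omega
      have e3 : x 3 = 0 := by omega
      have hc : toReal 4 x = 0 := by
        funext i
        fin_cases i <;> simp [toReal] <;> assumption
      rw [hc]
      exact Set.mem_zero.mpr rfl
  · have hkpos : (0:ℝ) < (k:ℝ) := by exact_mod_cast hk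
    rw [Set.mem_smul_set]
    constructor
    · rintro ⟨p, hp, heq⟩
      obtain ⟨h1, h2, h3⟩ := (mem_Pset_iff p).mp hp
      have hq : ∀ i, (x i : ℝ) = (k:ℝ) * p i := by
        intro i
        have := congrFun heq i
        simpa [toReal] using this.symm
      have hq0 := hq 0; have hq1 := hq 1; have hq2 := hq 2; have hq3 := hq 3
      refine ⟨fun i => ?_, fun i => ?_, ?_⟩
      · have : (0:ℝ) ≤ (x i : ℝ) := by
          rw [hq i]; exact mul_nonneg hkpos.le (h1 i)
        exact_mod_cast this
      · have hki := mul_le_mul_of_nonneg_left (h2 i) hkpos.le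
        have : (2 * x i : ℝ) ≤ ((x 0 + x 1 + x 2 + x 3 : ℤ) : ℝ) := by
          push_cast
          rw [hq i]
          linarith
        exact_mod_cast this
      · have hk2 := mul_le_mul_of_nonneg_left h3 hkpos.le
        have : ((x 0 + x 1 + x 2 + x 3 : ℤ) : ℝ) ≤ ((2 * k : ℤ) : ℝ) := by
          push_cast
          linarith
        exact_mod_cast this
    · rintro ⟨h1, h2, h3⟩
      obtain ⟨p, hpdef⟩ : ∃ p : Fin 4 → ℝ, p = fun i => (x i : ℝ) / k := ⟨_, rfl⟩
      have happ : ∀ i, p i = (x i : ℝ) / k := fun i => by rw [hpdef]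
      have hsum : p 0 + p 1 + p 2 + p 3 = ((x 0 + x 1 + x 2 + x 3 : ℤ) : ℝ) / k := by
        rw [happ 0, happ 1, happ 2, happ 3]
        push_cast
        ring
      refine ⟨p, (mem_Pset_iff p).mpr ⟨fun i => ?_, fun i => ?_, ?_⟩, ?_⟩
      · rw [happ i]
        have : (0:ℝ) ≤ (x i : ℝ) := by exact_mod_cast h1 i
        exact div_nonneg this hkpos.le
      · rw [happ i, hsum]
        have hcast : (2 * x i : ℝ) ≤ ((x 0 + x 1 + x 2 + x 3 : ℤ) : ℝ) := by
          exact_mod_cast h2 i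
        rw [show (2:ℝ) * ((x i : ℝ)/k) = (2 * x i : ℝ)/k by push_cast; ring]
        gcongr
      · rw [hsum, div_le_iff₀ hkpos]
        have : ((x 0 + x 1 + x 2 + x 3 : ℤ) : ℝ) ≤ ((2 * k : ℤ) : ℝ) := by exact_mod_cast h3
        push_cast at this ⊢
        linarith
      · funext i
        rw [Pi.smul_apply, happ i]
        simp only [toReal, smul_eq_mul]
        field_simp

open Finset in
noncomputable def Fz (k : ℕ) : Finset (Fin 4 → ℤ) :=
  (Fintype.piFinset fun _ : Fin 4 => Finset.Icc (0:ℤ) (k:ℤ)).filter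
    fun x => (∀ i, 2 * x i ≤ x 0 + x 1 + x 2 + x 3) ∧ x 0 + x 1 + x 2 + x 3 ≤ 2 * (k:ℤ)

lemma setOf_eq (k : ℕ) :
    {x : Fin 4 → ℤ | toReal 4 x ∈ (k:ℝ) • Pset} = ↑(Fz k) := by
  ext x
  rw [Set.mem_setOf_eq, mem_smul_iff]
  simp only [Fz, Finset.coe_filter, Set.mem_setOf_eq, Fintype.mem_piFinset, Finset.mem_Icc]
  constructor
  · rintro ⟨h1, h2, h3⟩
    refine ⟨fun i => ⟨h1 i, ?_⟩, h2, h3⟩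
    have := h2 i
    omega
  · rintro ⟨hb, h2, h3⟩
    exact ⟨fun i => (hb i).1, h2, h3⟩

open Finset in
lemma card_Fz (k : ℕ) : (Fz k).card = (CountAux.Q k).card := by
  refine Finset.card_nbij' (fun x => ((x 0).toNat, ((x 1).toNat, ((x 2).toNat, (x 3).toNat))))
    (fun q => ![(q.1 : ℤ), (q.2.1 : ℤ), (q.2.2.1 : ℤ), (q.2.2.2 : ℤ)]) ?_ ?_ ?_ ?_
  · intro x hx
    simp only [Finset.mem_coe, Fz, mem_filter, Fintype.mem_piFinset, mem_Icc] at hx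
    obtain ⟨hb, h2, h3⟩ := hx
    have hb0 := hb 0; have hb1 := hb 1; have hb2 := hb 2; have hb3 := hb 3
    have h20 := h2 0; have h21 := h2 1; have h22 := h2 2; have h23 := h2 3
    simp only [Finset.mem_coe, CountAux.Q, mem_filter, CountAux.mem_B4, CountAux.sum4]
    omega
  · intro q hq
    simp only [Finset.mem_coe, CountAux.Q, mem_filter, CountAux.mem_B4, CountAux.sum4] at hq
    simp only [Finset.mem_coe, Fz, mem_filter, Fintype.mem_piFinset, mem_Icc]
    refine ⟨fun i => ?_, fun i => ?_, ?_⟩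
    · fin_cases i <;> simp <;> omega
    · fin_cases i <;> simp <;> omega
    · simp <;> omega
  · intro x hx
    simp only [Finset.mem_coe, Fz, mem_filter, Fintype.mem_piFinset, mem_Icc] at hx
    obtain ⟨hb, h2, h3⟩ := hx
    have hb0 := hb 0; have hb1 := hb 1; have hb2 := hb 2; have hb3 := hb 3
    funext i
    fin_cases i <;> simp <;> omega
  · intro q hq
    simp
lemma ehr_eq (k : ℕ) : ehr 4 Pset k = ((CountAux.Q k).card : ℤ) := by
  unfold ehr
  rw [setOf_eq, Set.ncard_coe_finset, card_Fz]

lemma ehr_poly (k : ℕ) :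
    24 * ehr 4 Pset k = 8*(k:ℤ)^4 + 32*(k:ℤ)^3 + 52*(k:ℤ)^2 + 52*(k:ℤ) + 24 := by
  rw [ehr_eq]
  have := CountAux.card_Q k
  push_cast at this ⊢
  linarith

open PowerSeries in
lemma main_hstar :
    (PowerSeries.mk fun k => ehr 4 Pset k) * (1 - PowerSeries.X) ^ (4 + 1) =
      PowerSeries.mk fun i =>
        (((fun i => if i = 0 then 1 else if i = 1 then 2 else if i = 2 then 5 else 0) i : ℕ) : ℤ) := by
  have key : (PowerSeries.mk fun k => ehr 4 Pset k) * (1 - X) ^ (4+1) =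
      (PowerSeries.mk fun k => ehr 4 Pset k)
        - C (R := ℤ) 5 * ((PowerSeries.mk fun k => ehr 4 Pset k) * X^1)
        + C (R := ℤ) 10 * ((PowerSeries.mk fun k => ehr 4 Pset k) * X^2)
        - C (R := ℤ) 10 * ((PowerSeries.mk fun k => ehr 4 Pset k) * X^3)
        + C (R := ℤ) 5 * ((PowerSeries.mk fun k => ehr 4 Pset k) * X^4)
        - ((PowerSeries.mk fun k => ehr 4 Pset k) * X^5) := by
    simp only [map_ofNat]
    ring
  rw [key]
  ext n
  simp only [map_sub, map_add, coeff_C_mul, coeff_mk, coeff_mul_X_pow']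
  have E0 : ehr 4 Pset 0 = 1 := by have := ehr_poly 0; push_cast at this; linarith
  have E1 : ehr 4 Pset 1 = 7 := by have := ehr_poly 1; push_cast at this; linarith
  have E2 : ehr 4 Pset 2 = 30 := by have := ehr_poly 2; push_cast at this; linarith
  have E3 : ehr 4 Pset 3 = 90 := by have := ehr_poly 3; push_cast at this; linarith
  have E4 : ehr 4 Pset 4 = 215 := by have := ehr_poly 4; push_cast at this; linarith
  match n with
  | 0 => norm_num [E0]
  | 1 => norm_num [E0, E1]
  | 2 => norm_num [E0, E1, E2]
  | 3 => norm_num [E0, E1, E2, E3]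
  | 4 => norm_num [E0, E1, E2, E3, E4]
  | (n+5) =>
    rw [if_pos (by omega : 1 ≤ n+5), if_pos (by omega : 2 ≤ n+5), if_pos (by omega : 3 ≤ n+5),
      if_pos (by omega : 4 ≤ n+5), if_pos (by omega : 5 ≤ n+5)]
    rw [(by omega : n+5-1 = n+4), (by omega : n+5-2 = n+3), (by omega : n+5-3 = n+2),
      (by omega : n+5-4 = n+1), (by omega : n+5-5 = n)]
    have P0 := ehr_poly n
    have P1 := ehr_poly (n+1)
    have P2 := ehr_poly (n+2)
    have P3 := ehr_poly (n+3)
    have P4 := ehr_poly (n+4)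
    have P5 := ehr_poly (n+5)
    push_cast at P0 P1 P2 P3 P4 P5 ⊢
    have h24 : 24 * (ehr 4 Pset (n+5) - 5 * ehr 4 Pset (n+4) + 10 * ehr 4 Pset (n+3)
        - 10 * ehr 4 Pset (n+2) + 5 * ehr 4 Pset (n+1) - ehr 4 Pset n) = 0 := by
      linear_combination P5 - 5*P4 + 10*P3 - 10*P2 + 5*P1 - P0
    linarith

lemma vert_memP {v : Fin 4 → ℤ} (hv : v ∈ VZ) : toReal 4 v ∈ Pset :=
  subset_convexHull _ _ (Set.mem_image_of_mem _ hv)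

lemma int_even {x : Fin 4 → ℤ} (hx : toReal 4 x ∈ Pset) : 2 ∣ ∑ i, x i := by
  obtain ⟨h1, h2, h3⟩ := (mem_Pset_iff _).mp hx
  have g1 : ∀ i, 0 ≤ x i := by
    intro i
    have := h1 i
    simp only [toReal] at this
    exact_mod_cast this
  have g2 : ∀ i, 2 * x i ≤ x 0 + x 1 + x 2 + x 3 := by
    intro i
    have := h2 i
    simp only [toReal] at this
    exact_mod_cast this
  have g3 : x 0 + x 1 + x 2 + x 3 ≤ 2 := by
    have : ((x 0 + x 1 + x 2 + x 3 : ℤ) : ℝ) ≤ 2 := by push_cast; simpa [toReal] using h3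
    exact_mod_cast this
  have g10 := g1 0; have g11 := g1 1; have g12 := g1 2; have g13 := g1 3
  have g20 := g2 0; have g21 := g2 1; have g22 := g2 2; have g23 := g2 3
  rw [Fin.sum_univ_four]
  omega

def parity : (Fin 4 → ℤ) →+ ZMod 2 :=
  AddMonoidHom.mk' (fun x => ((∑ i, x i : ℤ) : ZMod 2)) (by
    intro a b
    push_cast [Finset.sum_add_distrib, Pi.add_apply]
    ring)

lemma parity_of_memP {x : Fin 4 → ℤ} (hx : toReal 4 x ∈ Pset) : parity x = 0 := by
  have := int_even hx
  simp only [parity, AddMonoidHom.mk'_apply]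
  rw [ZMod.intCast_zmod_eq_zero_iff_dvd]
  exact_mod_cast this

lemma parity_target : parity ![1,1,1,0] = 1 := by
  simp only [parity, AddMonoidHom.mk'_apply, Fin.sum_univ_four]
  decide

lemma not_in_closure :
    (![1,1,1,0] : Fin 4 → ℤ) ∉ AddSubgroup.closure {x : Fin 4 → ℤ | toReal 4 x ∈ Pset} := by
  intro hmem
  have hle : AddSubgroup.closure {x : Fin 4 → ℤ | toReal 4 x ∈ Pset} ≤ parity.ker := by
    rw [AddSubgroup.closure_le]
    intro x hx
    exact parity_of_memP hx
  have := hle hmem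
  rw [AddMonoidHom.mem_ker, parity_target] at this
  exact one_ne_zero this

def parity2 : ((Fin 4 → ℤ) × ℤ) →+ ZMod 2 := parity.comp (AddMonoidHom.fst _ _)

lemma not_in_latticeGroup :
    ((![1,1,1,0], 2) : (Fin 4 → ℤ) × ℤ) ∉ latticeGroup 4 Pset := by
  intro hmem
  have hle : latticeGroup 4 Pset ≤ parity2.ker := by
    rw [latticeGroup, AddSubgroup.closure_le]
    rintro z ⟨hz1, _⟩
    simp only [AddMonoidHom.mem_ker, parity2, AddMonoidHom.coe_comp, Function.comp_apply,
      AddMonoidHom.coe_fst, SetLike.mem_coe]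
    exact parity_of_memP hz1
  have := hle hmem
  rw [AddMonoidHom.mem_ker] at this
  have h2 : parity2 ((![1,1,1,0], 2)) = 1 := by
    simp only [parity2, AddMonoidHom.coe_comp, Function.comp_apply, AddMonoidHom.coe_fst]
    exact parity_target
  rw [h2] at this
  exact one_ne_zero this

lemma pair_in_span :
    toRealPair 4 ((![1,1,1,0], 2) : (Fin 4 → ℤ) × ℤ) ∈
      (Submodule.span ℝ (liftSet 4 Pset) : Set ((Fin 4 → ℝ) × ℝ)) := by
  have m1 : (toReal 4 ![1,1,0,0], (1:ℝ)) ∈ liftSet 4 Pset :=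
    ⟨vert_memP (by simp [VZ]), rfl⟩
  have m2 : (toReal 4 ![1,0,1,0], (1:ℝ)) ∈ liftSet 4 Pset :=
    ⟨vert_memP (by simp [VZ]), rfl⟩
  have m3 : (toReal 4 ![0,1,1,0], (1:ℝ)) ∈ liftSet 4 Pset :=
    ⟨vert_memP (by simp [VZ]), rfl⟩
  have m0 : (toReal 4 ![0,0,0,0], (1:ℝ)) ∈ liftSet 4 Pset :=
    ⟨vert_memP (by simp [VZ]), rfl⟩
  have hz : toRealPair 4 ((![1,1,1,0], 2) : (Fin 4 → ℤ) × ℤ) =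
      (1/2:ℝ) • (toReal 4 ![1,1,0,0], (1:ℝ)) + (1/2:ℝ) • (toReal 4 ![1,0,1,0], (1:ℝ))
        + (1/2:ℝ) • (toReal 4 ![0,1,1,0], (1:ℝ)) + (1/2:ℝ) • (toReal 4 ![0,0,0,0], (1:ℝ)) := by
    refine Prod.ext ?_ ?_
    · funext i
      fin_cases i <;> norm_num [toRealPair, toReal, Prod.fst_add, Prod.smul_fst]
    · norm_num [toRealPair, Prod.snd_add, Prod.smul_snd]
  rw [hz]
  have sp := Submodule.subset_span (R := ℝ) (s := liftSet 4 Pset)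
  exact Submodule.add_mem _
    (Submodule.add_mem _
      (Submodule.add_mem _ (Submodule.smul_mem _ _ (sp m1)) (Submodule.smul_mem _ _ (sp m2)))
      (Submodule.smul_mem _ _ (sp m3)))
    (Submodule.smul_mem _ _ (sp m0))

lemma vectorSpan_top : vectorSpan ℝ Pset = ⊤ := by
  refine le_antisymm le_top ?_
  have hd : ∀ v ∈ VZ, toReal 4 v ∈ vectorSpan ℝ Pset := by
    intro v hv
    have h0 : toReal 4 ![0,0,0,0] ∈ Pset := vert_memP (by simp [VZ])
    have := vsub_mem_vectorSpan ℝ (vert_memP hv) h0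
    have e : toReal 4 v -ᵥ toReal 4 ![0,0,0,0] = toReal 4 v := by
      funext i
      simp [toReal, vsub_eq_sub]
      fin_cases i <;> norm_num [toReal]
    rwa [e] at this
  have h12 := hd ![1,1,0,0] (by simp [VZ])
  have h13 := hd ![1,0,1,0] (by simp [VZ])
  have h14 := hd ![1,0,0,1] (by simp [VZ])
  have h23 := hd ![0,1,1,0] (by simp [VZ])
  have h24 := hd ![0,1,0,1] (by simp [VZ])
  have e0 : (![1,0,0,0] : Fin 4 → ℝ) ∈ vectorSpan ℝ Pset := by
    have hm := Submodule.smul_mem _ (1/2 : ℝ)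
      (Submodule.sub_mem _ (Submodule.add_mem _ h12 h13) h23)
    have e : (1/2:ℝ) • (toReal 4 ![1,1,0,0] + toReal 4 ![1,0,1,0] - toReal 4 ![0,1,1,0])
        = ![1,0,0,0] := by
      funext i
      fin_cases i <;> norm_num [toReal]
    rwa [e] at hm
  have e1 : (![0,1,0,0] : Fin 4 → ℝ) ∈ vectorSpan ℝ Pset := by
    have hm := Submodule.smul_mem _ (1/2 : ℝ)
      (Submodule.sub_mem _ (Submodule.add_mem _ h12 h23) h13)
    have e : (1/2:ℝ) • (toReal 4 ![1,1,0,0] + toReal 4 ![0,1,1,0] - toReal 4 ![1,0,1,0])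
        = ![0,1,0,0] := by
      funext i
      fin_cases i <;> norm_num [toReal]
    rwa [e] at hm
  have e2 : (![0,0,1,0] : Fin 4 → ℝ) ∈ vectorSpan ℝ Pset := by
    have hm := Submodule.smul_mem _ (1/2 : ℝ)
      (Submodule.sub_mem _ (Submodule.add_mem _ h13 h23) h12)
    have e : (1/2:ℝ) • (toReal 4 ![1,0,1,0] + toReal 4 ![0,1,1,0] - toReal 4 ![1,1,0,0])
        = ![0,0,1,0] := by
      funext i
      fin_cases i <;> norm_num [toReal]
    rwa [e] at hm
  have e3 : (![0,0,0,1] : Fin 4 → ℝ) ∈ vectorSpan ℝ Pset := by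
    have hm := Submodule.smul_mem _ (1/2 : ℝ)
      (Submodule.sub_mem _ (Submodule.add_mem _ h14 h24) h12)
    have e : (1/2:ℝ) • (toReal 4 ![1,0,0,1] + toReal 4 ![0,1,0,1] - toReal 4 ![1,1,0,0])
        = ![0,0,0,1] := by
      funext i
      fin_cases i <;> norm_num [toReal]
    rwa [e] at hm
  intro x _
  have hx : x = x 0 • (![1,0,0,0] : Fin 4 → ℝ) + x 1 • (![0,1,0,0] : Fin 4 → ℝ)
      + x 2 • (![0,0,1,0] : Fin 4 → ℝ) + x 3 • (![0,0,0,1] : Fin 4 → ℝ) := by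
    funext i
    fin_cases i <;> simp
  rw [hx]
  exact Submodule.add_mem _
    (Submodule.add_mem _
      (Submodule.add_mem _ (Submodule.smul_mem _ _ e0) (Submodule.smul_mem _ _ e1))
      (Submodule.smul_mem _ _ e2))
    (Submodule.smul_mem _ _ e3)

lemma dim_four : dimP 4 Pset = 4 := by
  rw [dimP, vectorSpan_top, finrank_top, Module.finrank_fintype_fun_eq_card, Fintype.card_fin]

end Aux
end LatticePolytope


open LatticePolytope in
/-- The 4-dimensional polytope with the seven listed vertices has `h^*`-vector `(1, 2, 5)`
and is not spanning; the point `(1,1,1,0)` lies in `2P ∩ ℤ⁴` but not in the lattice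
generated by the lattice points of `P`, since every lattice point of `P` has even
coordinate sum while `(1,1,1,0)` has odd coordinate sum. -/
theorem not_spanning_example :
    dimP 4 (convexHull ℝ (toReal 4 ''
        {![0,0,0,0], ![1,1,0,0], ![1,0,1,0], ![1,0,0,1],
          ![0,1,1,0], ![0,1,0,1], ![0,0,1,1]})) = 4 ∧
    HasHStar 4 (convexHull ℝ (toReal 4 ''
        {![0,0,0,0], ![1,1,0,0], ![1,0,1,0], ![1,0,0,1],
          ![0,1,1,0], ![0,1,0,1], ![0,0,1,1]})) 4
      (fun i => if i = 0 then 1 else if i = 1 then 2 else if i = 2 then 5 else 0) ∧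
    toReal 4 ![1,1,1,0] ∈ (2 : ℝ) • convexHull ℝ (toReal 4 ''
        {![0,0,0,0], ![1,1,0,0], ![1,0,1,0], ![1,0,0,1],
          ![0,1,1,0], ![0,1,0,1], ![0,0,1,1]}) ∧
    (∀ x : Fin 4 → ℤ, toReal 4 x ∈ convexHull ℝ (toReal 4 ''
        {![0,0,0,0], ![1,1,0,0], ![1,0,1,0], ![1,0,0,1],
          ![0,1,1,0], ![0,1,0,1], ![0,0,1,1]}) → 2 ∣ ∑ i, x i) ∧
    ¬ (2 ∣ ∑ i, (![1,1,1,0] : Fin 4 → ℤ) i) ∧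
    (![1,1,1,0] : Fin 4 → ℤ) ∉ AddSubgroup.closure
      {x : Fin 4 → ℤ | toReal 4 x ∈ convexHull ℝ (toReal 4 ''
        {![0,0,0,0], ![1,1,0,0], ![1,0,1,0], ![1,0,0,1],
          ![0,1,1,0], ![0,1,0,1], ![0,0,1,1]})} ∧
    ¬ IsSpanning 4 (convexHull ℝ (toReal 4 ''
        {![0,0,0,0], ![1,1,0,0], ![1,0,1,0], ![1,0,0,1],
          ![0,1,1,0], ![0,1,0,1], ![0,0,1,1]})) := by
  have hcast : ((2:ℕ):ℝ) = (2:ℝ) := by norm_num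
  refine ⟨?_, ?_, ?_, ?_, ?_, ?_, ?_⟩
  · exact Aux.dim_four
  · exact Aux.main_hstar
  · have h := (Aux.mem_smul_iff 2 ![1,1,1,0]).mpr ⟨by decide, by decide, by decide⟩
    rw [hcast] at h
    exact h
  · exact fun x hx => Aux.int_even hx
  · decide
  · exact Aux.not_in_closure
  · intro hsp
    exact Aux.not_in_latticeGroup ((hsp (![1,1,1,0], 2)).mpr Aux.pair_in_span)
end

section
/- Let P ⊂ ℝ^3 be the 3-simplex with vertices (0,0,0), (1,0,0), (0,4,0) and (1,0,3). Then P is IDP and its h*-vector is (1, 5, 6). In particular, an IDP lattice polytope of degree 2 may satisfy (1 + h*_1) ∣ h*_2 and h*_1 < h*_2. -/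
open scoped BigOperators Pointwise

/-!
For `a, b > 0` let `P = conv {0, e₀, a e₁, e₀ + b e₂}`. Its lattice points at height `k` with first
coordinate `s` are `{s} × [0, a (k - s)] × [0, b s]`, so the lattice points of the cone over `P` are
the product of those of the cones over the segments `[0, b]` and `[0, a]`. Hence the Ehrhart series
of `P` is the product `(1 + (b - 1) t) (1 + (a - 1) t) / (1 - t)⁴` of theirs, giving
`h* = (1, a + b - 2, (a - 1)(b - 1))`, which is `(1, 5, 6)` for `a = 4`, `b = 3`. The same slicing
shows `P` is IDP: a lattice point of `kP` with first coordinate `s` is a sum of `s` points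
`(1, 0, ≤ b)` and `k - s` points `(0, ≤ a, 0)`.
-/

namespace PowerSeries

theorem mk_mul_add_one_mul_one_sub_X_sq {R : Type*} [CommRing R] (c : R) :
    mk (fun n : ℕ => c * n + 1) * (1 - X) ^ 2 = 1 + C (c - 1) * X := by
  have h : mk (fun n : ℕ => c * n + 1) =
      (1 + C (c - 1) * X) * mk fun n => ((1 + n).choose 1 : R) := by
    ext n
    rcases n with _ | n
    · simp
    · rw [add_mul, one_mul, map_add, mul_assoc, coeff_C_mul, coeff_succ_X_mul, coeff_mk, coeff_mk,
        coeff_mk]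
      simp only [Nat.choose_one_right]
      push_cast
      ring
  rw [h, mul_assoc, mk_add_choose_mul_one_sub_pow_eq_one, mul_one]

end PowerSeries

theorem exists_fin_sum_eq_of_le_mul {c : ℤ} (hc : 0 ≤ c) :
    ∀ (m : ℕ) {z : ℤ}, 0 ≤ z → z ≤ c * m →
      ∃ f : Fin m → ℤ, (∀ j, 0 ≤ f j ∧ f j ≤ c) ∧ ∑ j, f j = z
  | 0, z, hz, hzc => ⟨Fin.elim0, fun j => j.elim0, by simp at hzc ⊢; omega⟩
  | m + 1, z, hz, hzc => by
    obtain ⟨f, hf, hsum⟩ := exists_fin_sum_eq_of_le_mul hc m (z := z - min c z)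
      (by linarith [min_le_right c z])
      (by push_cast at hzc; rcases min_cases c z with h | h <;> nlinarith)
    refine ⟨Fin.cons (min c z) f, Fin.cases ⟨le_min hc hz, min_le_left c z⟩ hf, ?_⟩
    rw [Fin.sum_univ_succ, Fin.cons_zero]
    simp only [Fin.cons_succ, hsum]
    ring

namespace LatticePolytope

open Finset PowerSeries

def simplexVerts (a b : ℤ) : Set (Fin 3 → ℤ) := {![0,0,0], ![1,0,0], ![0,a,0], ![1,0,b]}

def simplex (a b : ℤ) : Set (Fin 3 → ℝ) := convexHull ℝ (toReal 3 '' simplexVerts a b)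

def simplexIneqs (a b : ℤ) (r : ℝ) : Set (Fin 3 → ℝ) :=
  {v | 0 ≤ v 1 ∧ 0 ≤ v 2 ∧ v 2 ≤ b * v 0 ∧ a * v 0 + v 1 ≤ a * r}

variable {a b : ℤ}

theorem convex_simplexIneqs (r : ℝ) : Convex ℝ (simplexIneqs a b r) := by
  rintro x ⟨hx1, hx2, hx3, hx4⟩ y ⟨hy1, hy2, hy3, hy4⟩ s t hs ht hst
  obtain rfl : t = 1 - s := by linarith
  simp only [simplexIneqs, Set.mem_ofPred_eq, Pi.add_apply, Pi.smul_apply, smul_eq_mul]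
  refine ⟨by positivity, by positivity, ?_, ?_⟩
  · nlinarith [mul_le_mul_of_nonneg_left hx3 hs, mul_le_mul_of_nonneg_left hy3 ht]
  · nlinarith [mul_le_mul_of_nonneg_left hx4 hs, mul_le_mul_of_nonneg_left hy4 ht]

theorem simplex_eq_simplexIneqs (ha : 0 < a) (hb : 0 < b) :
    simplex a b = simplexIneqs a b 1 := by
  have ha' : (0 : ℝ) < a := by exact_mod_cast ha
  have hb' : (0 : ℝ) < b := by exact_mod_cast hb
  refine (convexHull_min ?_ (convex_simplexIneqs 1)).antisymm fun v ⟨h1, h2, h3, h4⟩ => ?_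
  · rintro _ ⟨w, hw, rfl⟩
    rcases hw with rfl | rfl | rfl | rfl <;>
      simp [simplexIneqs, toReal, ha.le, hb.le]
  have hv : v = ∑ i : Fin 4, ![1 - v 0 - v 1 / a, v 0 - v 2 / b, v 1 / a, v 2 / b] i •
      ![toReal 3 ![0,0,0], toReal 3 ![1,0,0], toReal 3 ![0,a,0], toReal 3 ![1,0,b]] i := by
    ext j
    fin_cases j <;> simp [Fin.sum_univ_four, toReal] <;> field_simp
  rw [hv]
  refine (convex_convexHull ℝ _).sum_mem (fun i _ => ?_) ?_ fun i _ => subset_convexHull ℝ _ ?_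
  · fin_cases i <;> simp
    · rw [div_le_iff₀ ha']; linarith
    · rw [div_le_iff₀ hb']; linarith
    · positivity
    · positivity
  · simp [Fin.sum_univ_four]
    ring
  · fin_cases i <;> exact ⟨_, by simp [simplexVerts], rfl⟩

theorem smul_simplexIneqs_one (ha : 0 < a) (hb : 0 < b) {r : ℝ} (hr : 0 ≤ r) :
    r • simplexIneqs a b 1 = simplexIneqs a b r := by
  have ha' : (0 : ℝ) < a := by exact_mod_cast ha
  have hb' : (0 : ℝ) < b := by exact_mod_cast hb
  ext v
  rcases hr.eq_or_lt with rfl | hr_pos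
  · have hne : (simplexIneqs a b 1).Nonempty := ⟨0, by simp [simplexIneqs, ha.le]⟩
    rw [Set.zero_smul_set hne, Set.mem_zero]
    constructor
    · rintro rfl
      simp [simplexIneqs]
    · rintro ⟨h1, h2, h3, h4⟩
      have h0 : v 0 = 0 := by nlinarith
      ext i
      fin_cases i <;> simp <;> nlinarith
  · rw [Set.mem_smul_set_iff_inv_smul_mem₀ hr_pos.ne']
    simp only [simplexIneqs, Set.mem_ofPred_eq, Pi.smul_apply, smul_eq_mul]
    field_simp
    simp only [zero_mul]

theorem toReal_mem_simplexIneqs (k : ℕ) (x : Fin 3 → ℤ) :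
    toReal 3 x ∈ simplexIneqs a b k ↔
      0 ≤ x 1 ∧ 0 ≤ x 2 ∧ x 2 ≤ b * x 0 ∧ a * x 0 + x 1 ≤ a * k := by
  simp only [simplexIneqs, Set.mem_ofPred_eq, toReal]
  norm_cast

theorem toReal_mem_smul_simplex (ha : 0 < a) (hb : 0 < b) (k : ℕ) (x : Fin 3 → ℤ) :
    toReal 3 x ∈ (k : ℝ) • simplex a b ↔
      0 ≤ x 1 ∧ 0 ≤ x 2 ∧ x 2 ≤ b * x 0 ∧ a * x 0 + x 1 ≤ a * k := by
  rw [simplex_eq_simplexIneqs ha hb, smul_simplexIneqs_one ha hb k.cast_nonneg,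
    toReal_mem_simplexIneqs]

theorem toReal_mem_simplex (ha : 0 < a) (hb : 0 < b) (x : Fin 3 → ℤ) :
    toReal 3 x ∈ simplex a b ↔ 0 ≤ x 1 ∧ 0 ≤ x 2 ∧ x 2 ≤ b * x 0 ∧ a * x 0 + x 1 ≤ a := by
  simpa using toReal_mem_smul_simplex ha hb 1 x

noncomputable def simplexDilatePoints (a b : ℤ) (k : ℕ) : Finset (Fin 3 → ℤ) :=
  (antidiagonal k).biUnion fun p =>
    (Icc 0 (a * p.2) ×ˢ Icc 0 (b * p.1)).image fun q => ![(p.1 : ℤ), q.1, q.2]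

theorem mem_simplexDilatePoints (ha : 0 < a) (hb : 0 < b) (k : ℕ) (x : Fin 3 → ℤ) :
    x ∈ simplexDilatePoints a b k ↔
      0 ≤ x 1 ∧ 0 ≤ x 2 ∧ x 2 ≤ b * x 0 ∧ a * x 0 + x 1 ≤ a * k := by
  simp only [simplexDilatePoints, mem_biUnion, HasAntidiagonal.mem_antidiagonal, mem_image,
    mem_product, mem_Icc]
  constructor
  · rintro ⟨⟨s, t⟩, rfl, ⟨u, w⟩, ⟨⟨hu0, hu⟩, hw0, hw⟩, rfl⟩
    simp only [Matrix.cons_val_zero, Matrix.cons_val_one, Matrix.cons_val_two, Matrix.head_cons,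
      Matrix.tail_cons]
    push_cast
    exact ⟨hu0, hw0, hw, by linarith⟩
  · rintro ⟨h1, h2, h3, h4⟩
    have h0 : 0 ≤ x 0 := by nlinarith
    have hk : x 0 ≤ k := by nlinarith
    refine ⟨((x 0).toNat, k - (x 0).toNat), by omega, (x 1, x 2), ⟨⟨h1, ?_⟩, h2, ?_⟩, ?_⟩
    · push_cast [Nat.cast_sub (by omega : (x 0).toNat ≤ k), Int.toNat_of_nonneg h0]
      linarith
    · simpa [Int.toNat_of_nonneg h0] using h3
    · ext i
      fin_cases i <;> simp [Int.toNat_of_nonneg h0]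

theorem card_simplexDilatePoints (ha : 0 ≤ a) (hb : 0 ≤ b) (k : ℕ) :
    ((simplexDilatePoints a b k).card : ℤ) =
      ∑ p ∈ antidiagonal k, (b * p.1 + 1) * (a * p.2 + 1) := by
  rw [simplexDilatePoints, card_biUnion]
  · push_cast
    refine sum_congr rfl fun p _ => ?_
    rw [card_image_of_injective, card_product, Int.card_Icc, Int.card_Icc, Nat.cast_mul,
      Int.toNat_of_nonneg (by linarith [mul_nonneg ha p.2.cast_nonneg]),
      Int.toNat_of_nonneg (by linarith [mul_nonneg hb p.1.cast_nonneg])]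
    · ring
    · intro q q' h
      exact Prod.ext (by simpa using congrFun h 1) (by simpa using congrFun h 2)
  · intro p hp p' hp' hne
    refine disjoint_left.2 fun x hx hx' => hne ?_
    simp only [mem_image] at hx hx'
    obtain ⟨q, -, rfl⟩ := hx
    obtain ⟨q', -, h⟩ := hx'
    have h1 : p.1 = p'.1 := by simpa using (congrFun h 0).symm
    rw [mem_coe, HasAntidiagonal.mem_antidiagonal] at hp hp'
    exact Prod.ext h1 (by omega)

theorem ehr_simplex (ha : 0 < a) (hb : 0 < b) (k : ℕ) :
    ehr 3 (simplex a b) k = ∑ p ∈ antidiagonal k, (b * p.1 + 1) * (a * p.2 + 1) := by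
  have hpts : {x : Fin 3 → ℤ | toReal 3 x ∈ (k : ℝ) • simplex a b} =
      simplexDilatePoints a b k := by
    ext x
    rw [Set.mem_ofPred_eq, toReal_mem_smul_simplex ha hb, mem_coe, mem_simplexDilatePoints ha hb]
  rw [ehr, hpts, Set.ncard_coe_finset, card_simplexDilatePoints ha.le hb.le]

theorem ehrhartSeries_simplex_mul_one_sub_X_pow_four (ha : 0 < a) (hb : 0 < b) :
    mk (fun k => ehr 3 (simplex a b) k) * (1 - X) ^ 4 =
      (1 + C (b - 1) * X) * (1 + C (a - 1) * X) := by
  have hprod : mk (fun k => ehr 3 (simplex a b) k) =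
      mk (fun n : ℕ => b * n + 1) * mk (fun n : ℕ => a * n + 1) := by
    ext k
    rw [coeff_mk, ehr_simplex ha hb, coeff_mul]
    simp only [coeff_mk]
  rw [hprod, ← mk_mul_add_one_mul_one_sub_X_sq, ← mk_mul_add_one_mul_one_sub_X_sq]
  ring

theorem hasHStar_simplex (ha : 0 < a) (hb : 0 < b) {h : ℕ → ℕ} (h0 : h 0 = 1)
    (h1 : (h 1 : ℤ) = a + b - 2) (h2 : (h 2 : ℤ) = (a - 1) * (b - 1))
    (hdeg : ∀ i, 3 ≤ i → h i = 0) : HasHStar 3 (simplex a b) 3 h := by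
  have hpoly : (1 + C (b - 1) * X) * (1 + C (a - 1) * X) =
      C 1 + C (a + b - 2) * X ^ 1 + C ((a - 1) * (b - 1)) * X ^ 2 := by
    simp only [map_add, map_sub, map_mul, map_one, map_ofNat]
    ring
  rw [HasHStar, ehrhartSeries_simplex_mul_one_sub_X_pow_four ha hb, hpoly]
  ext n
  simp only [map_add, coeff_C, coeff_C_mul_X_pow, coeff_mk]
  rcases n with _ | _ | _ | n <;> simp [h0, h1, h2, hdeg]

theorem isIDP_simplex (ha : 0 < a) (hb : 0 < b) : IsIDP 3 (simplex a b) := by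
  intro k x hx
  obtain ⟨h1, h2, h3, h4⟩ := (toReal_mem_smul_simplex ha hb k x).1 hx
  obtain ⟨s, hs⟩ : ∃ s : ℕ, (s : ℤ) = x 0 := ⟨(x 0).toNat, Int.toNat_of_nonneg (by nlinarith)⟩
  obtain ⟨t, rfl⟩ : ∃ t, k = s + t := Nat.exists_eq_add_of_le (by zify; nlinarith)
  obtain ⟨u, hu, hu_sum⟩ := exists_fin_sum_eq_of_le_mul hb.le s h2 (by rwa [hs])
  obtain ⟨w, hw, hw_sum⟩ := exists_fin_sum_eq_of_le_mul ha.le t h1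
    (by rw [← hs] at h4; push_cast at h4; linarith)
  refine ⟨Fin.append (fun j => ![1, 0, u j]) (fun j => ![0, w j, 0]), fun j => ?_, ?_⟩
  · rw [toReal_mem_simplex ha hb]
    refine Fin.addCases (fun j => ?_) (fun j => ?_) j <;> simp [hu, hw]
  · ext i
    rw [Finset.sum_apply, Fin.sum_univ_add]
    fin_cases i <;> simp [hs, hu_sum, hw_sum]

theorem dimP_simplex (ha : a ≠ 0) (hb : b ≠ 0) : dimP 3 (simplex a b) = 3 := by
  suffices vectorSpan ℝ (simplex a b) = ⊤ by
    rw [dimP, this, finrank_top, Module.finrank_fin_fun]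
  have hedge : ∀ w ∈ simplexVerts a b, ∀ w' ∈ simplexVerts a b,
      toReal 3 w -ᵥ toReal 3 w' ∈ vectorSpan ℝ (simplex a b) := fun w hw w' hw' =>
    vsub_mem_vectorSpan ℝ (subset_convexHull ℝ _ ⟨w, hw, rfl⟩)
      (subset_convexHull ℝ _ ⟨w', hw', rfl⟩)
  have hv (v : Fin 3 → ℝ) : v = v 0 • (toReal 3 ![1,0,0] -ᵥ toReal 3 ![0,0,0]) +
      (v 1 / a) • (toReal 3 ![0,a,0] -ᵥ toReal 3 ![0,0,0]) +
      (v 2 / b) • (toReal 3 ![1,0,b] -ᵥ toReal 3 ![1,0,0]) := by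
    ext i
    fin_cases i <;> simp [toReal, ha, hb]
  refine eq_top_iff.2 fun v _ => hv v ▸ add_mem (add_mem ?_ ?_) ?_ <;>
    exact Submodule.smul_mem _ _ (hedge _ (by simp [simplexVerts]) _ (by simp [simplexVerts]))

end LatticePolytope

open LatticePolytope in
/-- The 3-simplex with vertices `(0,0,0)`, `(1,0,0)`, `(0,4,0)`, `(1,0,3)` is IDP and has
`h^*`-vector `(1, 5, 6)`; in particular an IDP lattice polytope of degree 2 may satisfy
`(1 + h₁*) ∣ h₂*` and `h₁* < h₂*`. -/
theorem IDP_example_hstar_one_five_six :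
    dimP 3 (convexHull ℝ (toReal 3 ''
        {![0,0,0], ![1,0,0], ![0,4,0], ![1,0,3]})) = 3 ∧
    IsIDP 3 (convexHull ℝ (toReal 3 ''
        {![0,0,0], ![1,0,0], ![0,4,0], ![1,0,3]})) ∧
    HasHStar 3 (convexHull ℝ (toReal 3 ''
        {![0,0,0], ![1,0,0], ![0,4,0], ![1,0,3]})) 3
      (fun i => if i = 0 then 1 else if i = 1 then 5 else if i = 2 then 6 else 0) ∧
    (1 + 5) ∣ 6 ∧ 5 < 6 := by
  have ha : (0 : ℤ) < 4 := by norm_num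
  have hb : (0 : ℤ) < 3 := by norm_num
  refine ⟨dimP_simplex ha.ne' hb.ne', isIDP_simplex ha hb,
    hasHStar_simplex ha hb rfl (by norm_num) (by norm_num) fun i hi => ?_, by norm_num, by norm_num⟩
  split_ifs <;> omega
end

section
/- Let P ⊂ ℝ^3 be the 3-simplex with vertices (0,0,0), (1,0,0), (0,4,0) and (1,0,4). Then P is IDP and its h*-vector is (1, 6, 9). In particular, an IDP lattice polytope of degree 2 may satisfy (1 + h*_1) ∤ h*_2 while h*_1 < h*_2. -/
open scoped BigOperators Pointwise

namespace IDPAux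
open LatticePolytope Finset
open scoped Pointwise

/-! ### The inequality description of the simplex -/

def Q : Set (Fin 3 → ℝ) := {p | 0 ≤ p 1 ∧ 0 ≤ p 2 ∧ p 2 ≤ 4*p 0 ∧ 4*p 0 + p 1 ≤ 4}

lemma convex_Q : Convex ℝ Q := by
  rintro p ⟨h1,h2,h3,h4⟩ q ⟨g1,g2,g3,g4⟩ a b ha hb hab
  refine ⟨?_,?_,?_,?_⟩ <;>
    simp only [Pi.add_apply, Pi.smul_apply, smul_eq_mul] <;> nlinarith

lemma P_eq : convexHull ℝ (toReal 3 ''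
    {![0,0,0], ![1,0,0], ![0,4,0], ![1,0,4]}) = Q := by
  apply le_antisymm
  · apply convexHull_min _ convex_Q
    rintro _ ⟨v, hv, rfl⟩
    rcases hv with rfl | rfl | rfl | rfl <;>
      refine ⟨?_,?_,?_,?_⟩ <;> simp [toReal, Q]
  · rintro p ⟨h1,h2,h3,h4⟩
    set w : Fin 4 → ℝ := ![1 - p 0 - p 1/4, p 0 - p 2/4, p 1/4, p 2/4] with hw
    set z : Fin 4 → (Fin 3 → ℝ) :=
      ![toReal 3 ![0,0,0], toReal 3 ![1,0,0], toReal 3 ![0,4,0], toReal 3 ![1,0,4]] with hz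
    have hws : ∑ i, w i = 1 := by
      simp [hw, Fin.sum_univ_four]; ring
    have hmem := Finset.centerMass_mem_convexHull (Finset.univ) (w := w) (z := z)
      (s := toReal 3 '' {![0,0,0], ![1,0,0], ![0,4,0], ![1,0,4]})
      (by intro i _; fin_cases i <;> simp [hw] <;> linarith)
      (by rw [hws]; norm_num)
      (by intro i _; fin_cases i
          · exact ⟨_, Or.inl rfl, rfl⟩
          · exact ⟨_, Or.inr (Or.inl rfl), rfl⟩
          · exact ⟨_, Or.inr (Or.inr (Or.inl rfl)), rfl⟩
          · exact ⟨_, Or.inr (Or.inr (Or.inr rfl)), rfl⟩)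
    have : Finset.univ.centerMass w z = p := by
      rw [Finset.centerMass, hws, inv_one, one_smul]
      funext i
      rw [Fin.sum_univ_four]
      fin_cases i <;> simp [hw, hz, toReal] <;> ring
    rwa [this] at hmem

lemma mem_dilate (k : ℕ) (x : Fin 3 → ℤ) :
    toReal 3 x ∈ (k : ℝ) • Q ↔
      0 ≤ x 1 ∧ 0 ≤ x 2 ∧ x 2 ≤ 4 * x 0 ∧ 4 * x 0 + x 1 ≤ 4 * k := by
  constructor
  · rintro ⟨q, ⟨g1, g2, g3, g4⟩, hq⟩
    have hc : (0:ℝ) ≤ (k:ℝ) := by positivity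
    have e : ∀ i, (x i : ℝ) = (k:ℝ) * q i := fun i => by
      have := congrFun hq i; simp [toReal] at this; rw [← this]
    have r1 : (0:ℝ) ≤ (x 1 : ℝ) := by rw [e]; exact mul_nonneg hc g1
    have r2 : (0:ℝ) ≤ (x 2 : ℝ) := by rw [e]; exact mul_nonneg hc g2
    have r3 : (x 2 : ℝ) ≤ 4 * (x 0 : ℝ) := by
      rw [e, e]; nlinarith
    have r4 : 4 * (x 0 : ℝ) + (x 1 : ℝ) ≤ 4 * (k:ℝ) := by
      rw [e, e]; nlinarith
    refine ⟨by exact_mod_cast r1, by exact_mod_cast r2, by exact_mod_cast r3,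
      by exact_mod_cast r4⟩
  · rintro ⟨h1, h2, h3, h4⟩
    rcases Nat.eq_zero_or_pos k with rfl | hk
    · have hx : x = 0 := by
        funext i; fin_cases i <;> simp <;> omega
      refine ⟨0, ⟨le_refl _, le_refl _, by norm_num, by norm_num⟩, ?_⟩
      subst hx; funext i; simp [toReal]
    · have hc : (0:ℝ) < (k:ℝ) := by positivity
      refine ⟨fun i => (x i : ℝ) / k, ⟨?_, ?_, ?_, ?_⟩, ?_⟩
      · exact div_nonneg (by exact_mod_cast h1) hc.le
      · exact div_nonneg (by exact_mod_cast h2) hc.le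
      · rw [div_le_iff₀ hc]
        have : (x 2 : ℝ) ≤ 4 * (x 0 : ℝ) := by exact_mod_cast h3
        calc (x 2 : ℝ) ≤ 4 * (x 0 : ℝ) := this
          _ = 4 * ((x 0 : ℝ) / k) * k := by field_simp
      · have h4' : 4 * (x 0 : ℝ) + (x 1 : ℝ) ≤ 4 * (k:ℝ) := by exact_mod_cast h4
        show 4 * ((x 0:ℝ) / k) + (x 1:ℝ)/k ≤ 4
        have : 4 * ((x 0:ℝ) / k) + (x 1:ℝ)/k = (4 * (x 0:ℝ) + x 1)/k := by ring
        rw [this, div_le_iff₀ hc]; linarith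
      · funext i; simp [toReal]; field_simp

lemma mem_Q_int (x : Fin 3 → ℤ) :
    toReal 3 x ∈ Q ↔ 0 ≤ x 1 ∧ 0 ≤ x 2 ∧ x 2 ≤ 4 * x 0 ∧ 4 * x 0 + x 1 ≤ 4 := by
  have := mem_dilate 1 x
  rw [Nat.cast_one, one_smul] at this
  simpa using this

/-! ### Counting lattice points -/

lemma sumA (k : ℕ) : 2 * ∑ a ∈ range (k+1), (a:ℤ) = k * (k+1) := by
  induction k with
  | zero => simp
  | succ k ih => rw [sum_range_succ, mul_add, ih]; push_cast; ring

lemma sumB (k : ℕ) : 6 * ∑ a ∈ range (k+1), (a:ℤ)^2 = k * (k+1) * (2*k+1) := by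
  induction k with
  | zero => simp
  | succ k ih => rw [sum_range_succ, mul_add, ih]; push_cast; ring

lemma sum_lin (k : ℕ) :
    3 * ∑ a ∈ range (k+1), ((4*(k:ℤ) - 4*a + 1) * (4*a + 1)) =
      8*(k:ℤ)^3 + 12*(k:ℤ)^2 + 7*k + 3 := by
  have e1 : ∑ a ∈ range (k+1), ((4*(k:ℤ) - 4*a + 1) * (4*a + 1)) =
      16*(k:ℤ) * (∑ a ∈ range (k+1), (a:ℤ)) - 16 * (∑ a ∈ range (k+1), (a:ℤ)^2)
        + (k+1) * (4*k+1) := by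
    rw [mul_sum, mul_sum, ← sum_sub_distrib]
    have e2 : ∑ a ∈ range (k+1), ((4*(k:ℤ) - 4*a + 1) * (4*a + 1)) =
        ∑ a ∈ range (k+1), ((16*(k:ℤ)*a - 16*(a:ℤ)^2) + (4*(k:ℤ)+1)) :=
      sum_congr rfl fun a _ => by ring
    rw [e2, sum_add_distrib, sum_const, card_range]
    push_cast
    ring
  rw [e1]
  linear_combination (24*(k:ℤ)) * sumA k - 8 * sumB k

noncomputable def box (k : ℕ) : Finset (ℤ × ℤ × ℤ) :=
  (range (k+1)).biUnion fun a =>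
    {((a:ℤ))} ×ˢ (Finset.Icc (0:ℤ) (4*(k:ℤ) - 4*a)) ×ˢ (Finset.Icc (0:ℤ) (4*(a:ℤ)))

lemma mem_box (k : ℕ) (p : ℤ × ℤ × ℤ) :
    p ∈ box k ↔ 0 ≤ p.2.1 ∧ 0 ≤ p.2.2 ∧ p.2.2 ≤ 4 * p.1 ∧ 4 * p.1 + p.2.1 ≤ 4 * k := by
  simp only [box, mem_biUnion, mem_range, mem_product, mem_singleton, mem_Icc]
  constructor
  · rintro ⟨a, ha, h1, ⟨h2, h3⟩, h4, h5⟩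
    omega
  · rintro ⟨h1, h2, h3, h4⟩
    exact ⟨p.1.toNat, by omega, by omega, ⟨by omega, by omega⟩, by omega, by omega⟩

lemma card_box (k : ℕ) : 3 * ((box k).card : ℤ) =
    8*(k:ℤ)^3 + 12*(k:ℤ)^2 + 7*k + 3 := by
  rw [box, card_biUnion]
  · have : ∀ a ∈ range (k+1),
        ((({((a:ℤ))} ×ˢ (Finset.Icc (0:ℤ) (4*(k:ℤ) - 4*a)) ×ˢ
           (Finset.Icc (0:ℤ) (4*(a:ℤ)))).card : ℤ)) =
        (4*(k:ℤ) - 4*a + 1) * (4*a + 1) := by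
      intro a ha
      rw [mem_range] at ha
      rw [card_product, card_product, card_singleton, one_mul, Int.card_Icc, Int.card_Icc]
      push_cast [Int.toNat_of_nonneg (by omega : (0:ℤ) ≤ 4*(k:ℤ) - 4*a + 1 - 0),
        Int.toNat_of_nonneg (by omega : (0:ℤ) ≤ 4*(a:ℤ) + 1 - 0)]
      ring
    rw [Nat.cast_sum, sum_congr rfl this]
    exact sum_lin k
  · intro a ha b hb hab
    simp only [disjoint_left]
    rintro p hp hq
    rw [mem_product, mem_singleton] at hp hq
    apply hab
    have := hp.1.symm.trans hq.1
    exact_mod_cast this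

lemma ehr_val (k : ℕ) :
    3 * (Set.ncard {x : Fin 3 → ℤ | toReal 3 x ∈ (k:ℝ) • Q} : ℤ) =
      8*(k:ℤ)^3 + 12*(k:ℤ)^2 + 7*k + 3 := by
  have hset : {x : Fin 3 → ℤ | toReal 3 x ∈ (k:ℝ) • Q} =
      (fun p : ℤ × ℤ × ℤ => ![p.1, p.2.1, p.2.2]) '' ↑(box k) := by
    ext x
    rw [Set.mem_setOf_eq, mem_dilate]
    constructor
    · rintro ⟨h1, h2, h3, h4⟩
      refine ⟨(x 0, x 1, x 2), ?_, ?_⟩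
      · rw [Finset.mem_coe, mem_box]; exact ⟨h1, h2, h3, h4⟩
      · funext i; fin_cases i <;> rfl
    · rintro ⟨p, hp, rfl⟩
      rw [Finset.mem_coe, mem_box] at hp
      simpa using hp
  have hinj : Function.Injective (fun p : ℤ × ℤ × ℤ => ![p.1, p.2.1, p.2.2]) := by
    rintro ⟨a, b, c⟩ ⟨a', b', c'⟩ h
    have h0 := congrFun h 0
    have h1 := congrFun h 1
    have h2 := congrFun h 2
    simp at h0 h1 h2
    simp [h0, h1, h2]
  rw [hset, Set.ncard_image_of_injective _ hinj, Set.ncard_coe_finset]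
  exact card_box k

/-! ### Power series differences -/

def delta (e : ℕ → ℤ) : ℕ → ℤ := fun m => e m - (match m with | 0 => 0 | j+1 => e j)

lemma mul_one_sub (e : ℕ → ℤ) :
    (PowerSeries.mk e) * (1 - PowerSeries.X) = PowerSeries.mk (delta e) := by
  ext m
  rw [mul_sub, mul_one, map_sub]
  cases m with
  | zero => simp [delta]
  | succ j => simp [PowerSeries.coeff_succ_mul_X, delta]

lemma mul_one_sub_pow (j : ℕ) (e : ℕ → ℤ) :
    (PowerSeries.mk e) * (1 - PowerSeries.X) ^ j = PowerSeries.mk (delta^[j] e) := by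
  induction j generalizing e with
  | zero => simp
  | succ j ih =>
      rw [pow_succ, ← mul_assoc, ih e, mul_one_sub]
      exact congrArg _ (Function.iterate_succ_apply' delta j e).symm

lemma d4_succ (e : ℕ → ℤ) (m : ℕ) :
    delta^[4] e (m+4) = e (m+4) - 4*e (m+3) + 6*e (m+2) - 4*e (m+1) + e m := by
  show delta (delta (delta (delta e))) (m+4) = _
  simp only [delta]
  ring

lemma d4_0 (e : ℕ → ℤ) : delta^[4] e 0 = e 0 := by
  show delta (delta (delta (delta e))) 0 = _
  simp only [delta]; ring

lemma d4_1 (e : ℕ → ℤ) : delta^[4] e 1 = e 1 - 4*e 0 := by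
  show delta (delta (delta (delta e))) 1 = _
  simp only [delta]; ring

lemma d4_2 (e : ℕ → ℤ) : delta^[4] e 2 = e 2 - 4*e 1 + 6*e 0 := by
  show delta (delta (delta (delta e))) 2 = _
  simp only [delta]; ring

lemma d4_3 (e : ℕ → ℤ) : delta^[4] e 3 = e 3 - 4*e 2 + 6*e 1 - 4*e 0 := by
  show delta (delta (delta (delta e))) 3 = _
  simp only [delta]; ring

/-! ### Distributing an integer into chunks of size at most 4 -/

lemma chunk : ∀ (N : ℕ) (z : ℤ), 0 ≤ z → z ≤ 4*N →
    ∑ j ∈ range N, min 4 (max 0 (z - 4*(j:ℤ))) = z := by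
  intro N
  induction N with
  | zero => intro z h1 h2; simp at h2 ⊢; omega
  | succ N ih =>
      intro z h1 h2
      rw [Finset.sum_range_succ']
      rcases le_or_gt z 4 with hz | hz
      · have hrest : ∑ j ∈ range N, min 4 (max 0 (z - 4*((j:ℕ)+1:ℤ))) = 0 := by
          apply Finset.sum_eq_zero
          intro j hj
          have : z - 4*((j:ℤ)+1) ≤ 0 := by omega
          omega
        have h0 : min 4 (max 0 (z - 4*((0:ℕ):ℤ))) = z := by push_cast; omega
        push_cast at hrest ⊢
        omega
      · have h0 : min 4 (max 0 (z - 4*((0:ℕ):ℤ))) = 4 := by push_cast; omega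
        have := ih (z - 4) (by omega) (by push_cast at h2 ⊢; omega)
        have hrw : ∀ j ∈ range N, min 4 (max 0 (z - 4*(((j:ℕ)+1:ℕ):ℤ))) =
            min 4 (max 0 ((z-4) - 4*(j:ℤ))) := by
          intro j hj; push_cast; ring_nf
        rw [Finset.sum_congr rfl hrw, this, h0]
        ring

end IDPAux

open LatticePolytope in
/-- The 3-simplex with vertices `(0,0,0)`, `(1,0,0)`, `(0,4,0)`, `(1,0,4)` is IDP and has
`h^*`-vector `(1, 6, 9)`; in particular an IDP lattice polytope of degree 2 may satisfy
`(1 + h₁*) ∤ h₂*` while `h₁* < h₂*`. -/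
theorem IDP_example_hstar_one_six_nine :
    dimP 3 (convexHull ℝ (toReal 3 ''
        {![0,0,0], ![1,0,0], ![0,4,0], ![1,0,4]})) = 3 ∧
    IsIDP 3 (convexHull ℝ (toReal 3 ''
        {![0,0,0], ![1,0,0], ![0,4,0], ![1,0,4]})) ∧
    HasHStar 3 (convexHull ℝ (toReal 3 ''
        {![0,0,0], ![1,0,0], ![0,4,0], ![1,0,4]})) 3
      (fun i => if i = 0 then 1 else if i = 1 then 6 else if i = 2 then 9 else 0) ∧
    ¬ ((1 + 6) ∣ 9) ∧ 6 < 9 := by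
  refine ⟨?_, ?_, ?_, by decide, by norm_num⟩
  · -- dimension is 3
    have hv0 : toReal 3 ![0,0,0] ∈ convexHull ℝ (toReal 3 ''
        {![0,0,0], ![1,0,0], ![0,4,0], ![1,0,4]}) :=
      subset_convexHull _ _ ⟨_, Or.inl rfl, rfl⟩
    have hv1 : toReal 3 ![1,0,0] ∈ convexHull ℝ (toReal 3 ''
        {![0,0,0], ![1,0,0], ![0,4,0], ![1,0,4]}) :=
      subset_convexHull _ _ ⟨_, Or.inr (Or.inl rfl), rfl⟩
    have hv2 : toReal 3 ![0,4,0] ∈ convexHull ℝ (toReal 3 ''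
        {![0,0,0], ![1,0,0], ![0,4,0], ![1,0,4]}) :=
      subset_convexHull _ _ ⟨_, Or.inr (Or.inr (Or.inl rfl)), rfl⟩
    have hv3 : toReal 3 ![1,0,4] ∈ convexHull ℝ (toReal 3 ''
        {![0,0,0], ![1,0,0], ![0,4,0], ![1,0,4]}) :=
      subset_convexHull _ _ ⟨_, Or.inr (Or.inr (Or.inr rfl)), rfl⟩
    have hspan : vectorSpan ℝ (convexHull ℝ (toReal 3 ''
        {![0,0,0], ![1,0,0], ![0,4,0], ![1,0,4]})) = ⊤ := by
      rw [eq_top_iff]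
      rintro x -
      have d1 := vsub_mem_vectorSpan ℝ hv1 hv0
      have d2 := vsub_mem_vectorSpan ℝ hv2 hv0
      have d3 := vsub_mem_vectorSpan ℝ hv3 hv1
      have hx : x = x 0 • (toReal 3 ![1,0,0] -ᵥ toReal 3 ![0,0,0])
          + (x 1 / 4) • (toReal 3 ![0,4,0] -ᵥ toReal 3 ![0,0,0])
          + (x 2 / 4) • (toReal 3 ![1,0,4] -ᵥ toReal 3 ![1,0,0]) := by
        funext i; fin_cases i <;> simp [toReal] <;> ring
      rw [hx]
      exact add_mem (add_mem (Submodule.smul_mem _ _ d1) (Submodule.smul_mem _ _ d2))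
        (Submodule.smul_mem _ _ d3)
    show Module.finrank ℝ ↥(vectorSpan ℝ _) = 3
    rw [hspan, finrank_top]
    simp
  · -- IDP
    intro k x hx
    rw [IDPAux.P_eq, IDPAux.mem_dilate] at hx
    obtain ⟨h1, h2, h3, h4⟩ := hx
    set x0 : ℕ := (x 0).toNat with hx0def
    have hx0 : (x0:ℤ) = x 0 := Int.toNat_of_nonneg (by omega)
    have hx0k : x0 ≤ k := by omega
    set g : ℕ → Fin 3 → ℤ := fun jn =>
      if jn < x0 then ![1, 0, min 4 (max 0 (x 2 - 4*(jn:ℤ)))]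
      else ![0, min 4 (max 0 (x 1 - 4*((jn - x0 : ℕ):ℤ))), 0] with hg
    refine ⟨fun j => g (j:ℕ), ?_, ?_⟩
    · intro j
      rw [IDPAux.P_eq, IDPAux.mem_Q_int]
      by_cases hj : (j:ℕ) < x0 <;>
        refine ⟨?_, ?_, ?_, ?_⟩ <;> simp [hg, hj] <;> omega
    · funext i
      rw [Finset.sum_apply]
      rw [Fin.sum_univ_eq_sum_range (fun jn => g jn i) k]
      rw [← Finset.sum_range_add_sum_Ico _ hx0k]
      fin_cases i
      · show (∑ jn ∈ Finset.range x0, g jn 0) + (∑ jn ∈ Finset.Ico x0 k, g jn 0) = x 0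
        have ht : ∀ jn ∈ Finset.range x0, g jn 0 = 1 := fun jn hj => by
          rw [Finset.mem_range] at hj; simp [hg, hj]
        have e2 : ∑ jn ∈ Finset.Ico x0 k, g jn 0 = 0 :=
          Finset.sum_eq_zero fun jn hj => by
            rw [Finset.mem_Ico] at hj
            simp [hg, Nat.not_lt.mpr hj.1]
        rw [Finset.sum_congr rfl ht, e2, add_zero, Finset.sum_const, Finset.card_range]
        simp [hx0]
      · show (∑ jn ∈ Finset.range x0, g jn 1) + (∑ jn ∈ Finset.Ico x0 k, g jn 1) = x 1
        have e1 : ∑ jn ∈ Finset.range x0, g jn 1 = 0 :=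
          Finset.sum_eq_zero fun jn hj => by
            rw [Finset.mem_range] at hj
            simp [hg, hj]
        have ht : ∀ jn ∈ Finset.Ico x0 k, g jn 1 =
            min 4 (max 0 (x 1 - 4*((jn - x0 : ℕ):ℤ))) := fun jn hj => by
          rw [Finset.mem_Ico] at hj
          simp [hg, Nat.not_lt.mpr hj.1]
        rw [e1, zero_add, Finset.sum_congr rfl ht, Finset.sum_Ico_eq_sum_range]
        simp only [Nat.add_sub_cancel_left]
        refine IDPAux.chunk (k - x0) (x 1) h1 ?_
        push_cast [Nat.cast_sub hx0k]
        omega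
      · show (∑ jn ∈ Finset.range x0, g jn 2) + (∑ jn ∈ Finset.Ico x0 k, g jn 2) = x 2
        have ht : ∀ jn ∈ Finset.range x0, g jn 2 =
            min 4 (max 0 (x 2 - 4*(jn:ℤ))) := fun jn hj => by
          rw [Finset.mem_range] at hj; simp [hg, hj]
        have e2 : ∑ jn ∈ Finset.Ico x0 k, g jn 2 = 0 :=
          Finset.sum_eq_zero fun jn hj => by
            rw [Finset.mem_Ico] at hj
            simp [hg, Nat.not_lt.mpr hj.1]
        rw [Finset.sum_congr rfl ht, e2, add_zero]
        exact IDPAux.chunk x0 (x 2) h2 (by omega)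
  · -- h* vector
    unfold HasHStar
    rw [IDPAux.mul_one_sub_pow]
    set e : ℕ → ℤ := fun k => ehr 3 (convexHull ℝ (toReal 3 ''
        {![0,0,0], ![1,0,0], ![0,4,0], ![1,0,4]})) k with he
    have hv : ∀ j : ℕ, 3 * e j = 8*(j:ℤ)^3 + 12*(j:ℤ)^2 + 7*j + 3 := by
      intro j
      have : e j = (Set.ncard {x : Fin 3 → ℤ | toReal 3 x ∈ (j:ℝ) • IDPAux.Q} : ℤ) := by
        rw [he]
        simp only [ehr, IDPAux.P_eq]
      rw [this]
      exact IDPAux.ehr_val j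
    ext m
    rw [PowerSeries.coeff_mk, PowerSeries.coeff_mk]
    match m with
    | 0 =>
        rw [IDPAux.d4_0]
        have := hv 0
        push_cast at this
        norm_num
        linarith
    | 1 =>
        rw [IDPAux.d4_1]
        have h0 := hv 0
        have h1 := hv 1
        push_cast at h0 h1
        norm_num
        linarith
    | 2 =>
        rw [IDPAux.d4_2]
        have h0 := hv 0
        have h1 := hv 1
        have h2 := hv 2
        push_cast at h0 h1 h2
        norm_num
        linarith
    | 3 =>
        rw [IDPAux.d4_3]
        have h0 := hv 0
        have h1 := hv 1
        have h2 := hv 2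
        have h3 := hv 3
        push_cast at h0 h1 h2 h3
        norm_num
        linarith
    | (m+4) =>
        rw [IDPAux.d4_succ]
        have hrhs : (fun i => if i = 0 then 1 else if i = 1 then 6
            else if i = 2 then 9 else 0) (m+4) = (0:ℕ) := by
          show (if m+4 = 0 then 1 else if m+4 = 1 then 6 else if m+4 = 2 then 9 else 0) = 0
          rw [if_neg (by omega), if_neg (by omega), if_neg (by omega)]
        rw [hrhs, Nat.cast_zero]
        have h0 := hv m
        have h1 := hv (m+1)
        have h2 := hv (m+2)
        have h3 := hv (m+3)
        have h4 := hv (m+4)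
        push_cast at h0 h1 h2 h3 h4
        have key : 3 * (e (m+4) - 4*e (m+3) + 6*e (m+2) - 4*e (m+1) + e m) = 0 := by
          linear_combination h4 - 4*h3 + 6*h2 - 4*h1 + h0
        push_cast
        linarith
end
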